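/- arXiv:1309.4151 — 3 statements merged into one kernel-verified Lean document; each statement's English description precedes it below -/
import Mathlib

section
/- Suppose f satisfies the local Hölder condition with exponent β > 0 and constant L > 0 on U_{x₀,h}, that f(x) ≤ Γ for all x ∈ I, that H(x₀) ≥ γ, that √2 · L · h^β ≤ γ, that Nh ≥ 1, and that the full square window {x₀ + (i/N, j/N) : |i| ≤ Nh, |j| ≤ Nh} is contained in I. Then the variance term of the oracle weights satisfies f(x₀) · Σ_{x∈U_{x₀,h}} w*_h(x)² ≤ 3Γ / (h² n). -/
open Real Finset

noncomputable section

/-- The uniform `N × N` pixel grid `I = {1/N, 2/N, …, 1}²` in `(0,1]²`. -/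
def grid (N : ℕ) : Finset (ℝ × ℝ) :=
  (Finset.Icc 1 N ×ˢ Finset.Icc 1 N).image (fun p => ((p.1 : ℝ) / N, (p.2 : ℝ) / N))

/-- The search window `U_{x₀,h} = {x ∈ I : ‖x − x₀‖_∞ ≤ h}` (the norm on `ℝ × ℝ` is the
sup norm). -/
def window (N : ℕ) (x₀ : ℝ × ℝ) (h : ℝ) : Finset (ℝ × ℝ) :=
  (grid N).filter (fun x => ‖x - x₀‖ ≤ h)

/-- The oracle weights
`w*_h(x) = exp(−(f x − f x₀)²/H(x₀)²) / Σ_{x'∈U_{x₀,h}} exp(−(f x' − f x₀)²/H(x₀)²)`. -/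
def oracleWeight (N : ℕ) (f H : ℝ × ℝ → ℝ) (x₀ : ℝ × ℝ) (h : ℝ) (x : ℝ × ℝ) : ℝ :=
  Real.exp (-(f x - f x₀) ^ 2 / (H x₀) ^ 2) /
    ∑ x' ∈ window N x₀ h, Real.exp (-(f x' - f x₀) ^ 2 / (H x₀) ^ 2)

/-!
Every pixel of the window differs from `x₀` in intensity by at most `L h^β ≤ H(x₀)/√2`, so each
Gaussian factor `exp(-(f x - f x₀)²/H(x₀)²)` lies in `[1/2, 1]`. Since the factors are at most `1`,
the squared normalised weights sum to at most the inverse of the normaliser, and the normaliser is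
at least half the number of pixels in the window, which is at least `(2k+1)²`.
-/

theorem sum_sq_div_sum_le_inv_sum {ι : Type*} (s : Finset ι) (e : ι → ℝ)
    (he0 : ∀ i ∈ s, 0 ≤ e i) (he1 : ∀ i ∈ s, e i ≤ 1) :
    ∑ i ∈ s, (e i / ∑ j ∈ s, e j) ^ 2 ≤ (∑ j ∈ s, e j)⁻¹ := by
  set D := ∑ j ∈ s, e j
  calc ∑ i ∈ s, (e i / D) ^ 2 = ∑ i ∈ s, e i ^ 2 / D ^ 2 := by simp only [div_pow]
    _ ≤ ∑ i ∈ s, e i / D ^ 2 := by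
        gcongr with i hi
        exact pow_le_of_le_one (he0 i hi) (he1 i hi) two_ne_zero
    _ = D⁻¹ := by rw [← Finset.sum_div, sq, div_self_mul_self']

theorem two_mul_sq_le_sq_of_abs_le {d a H : ℝ} (hd : |d| ≤ a) (ha : √2 * a ≤ H) :
    2 * d ^ 2 ≤ H ^ 2 := by
  have h2 : (√2 * |d|) ^ 2 = 2 * d ^ 2 := by
    rw [mul_pow, sq_sqrt zero_le_two, sq_abs]
  rw [← h2]
  exact pow_le_pow_left₀ (by positivity)
    ((mul_le_mul_of_nonneg_left hd (sqrt_nonneg 2)).trans ha) 2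

theorem half_le_exp_neg_sq_div_sq {d H : ℝ} (h : 2 * d ^ 2 ≤ H ^ 2) :
    1 / 2 ≤ exp (-d ^ 2 / H ^ 2) := by
  have hq : d ^ 2 / H ^ 2 ≤ 1 / 2 :=
    div_le_of_le_mul₀ (sq_nonneg H) (by norm_num) (by linarith)
  calc 1 / 2 ≤ -d ^ 2 / H ^ 2 + 1 := by rw [neg_div]; linarith
    _ ≤ exp (-d ^ 2 / H ^ 2) := add_one_le_exp _

theorem mem_window_self {N : ℕ} {x₀ : ℝ × ℝ} {h : ℝ} (hx₀ : x₀ ∈ grid N) (hh : 0 ≤ h) :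
    x₀ ∈ window N x₀ h :=
  mem_filter.mpr ⟨hx₀, by rwa [sub_self, norm_zero]⟩

theorem abs_sub_le_of_mem_window {N : ℕ} {f : ℝ × ℝ → ℝ} {x₀ x : ℝ × ℝ} {h β L : ℝ}
    (hβ : 0 ≤ β) (hL : 0 ≤ L)
    (hHolder : ∀ y ∈ window N x₀ h, ∀ z ∈ window N x₀ h, |f y - f z| ≤ L * ‖y - z‖ ^ β)
    (hx₀ : x₀ ∈ window N x₀ h) (hx : x ∈ window N x₀ h) :
    |f x - f x₀| ≤ L * h ^ β :=
  (hHolder x hx x₀ hx₀).trans <|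
    mul_le_mul_of_nonneg_left
      (rpow_le_rpow (norm_nonneg _) (mem_filter.mp hx).2 hβ) hL

def gridShift (N : ℕ) (x₀ : ℝ × ℝ) (p : ℤ × ℤ) : ℝ × ℝ :=
  (x₀.1 + (p.1 : ℝ) / N, x₀.2 + (p.2 : ℝ) / N)

theorem gridShift_injective {N : ℕ} (hN : N ≠ 0) (x₀ : ℝ × ℝ) :
    Function.Injective (gridShift N x₀) := by
  have hN' : (N : ℝ) ≠ 0 := Nat.cast_ne_zero.mpr hN
  intro p q hpq
  simp only [gridShift, Prod.ext_iff, add_right_inj, div_left_inj' hN', Int.cast_inj] at hpq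
  exact Prod.ext hpq.1 hpq.2

theorem norm_gridShift_sub_le {N k : ℕ} (x₀ : ℝ × ℝ) {p : ℤ × ℤ}
    (hp₁ : |p.1| ≤ k) (hp₂ : |p.2| ≤ k) :
    ‖gridShift N x₀ p - x₀‖ ≤ (k : ℝ) / N := by
  have hcoord : ∀ m : ℤ, |m| ≤ k → ‖(m : ℝ) / N‖ ≤ (k : ℝ) / N := fun m hm => by
    rw [norm_div, Real.norm_natCast, Real.norm_eq_abs, ← Int.cast_abs]
    gcongr
    exact_mod_cast hm
  simpa only [gridShift, Prod.norm_def, Prod.fst_sub, Prod.snd_sub, add_sub_cancel_left]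
    using max_le (hcoord _ hp₁) (hcoord _ hp₂)

theorem sq_two_mul_add_one_le_card_window {N k : ℕ} (hN : N ≠ 0) {x₀ : ℝ × ℝ}
    (hfull : ∀ i j : ℤ, |i| ≤ (k : ℤ) → |j| ≤ (k : ℤ) →
      (x₀.1 + (i : ℝ) / N, x₀.2 + (j : ℝ) / N) ∈ grid N) :
    (2 * k + 1) ^ 2 ≤ #(window N x₀ ((k : ℝ) / N)) := by
  set box := Icc (-(k : ℤ)) k ×ˢ Icc (-(k : ℤ)) k
  have hbox : #box = (2 * k + 1) ^ 2 := by
    rw [card_product, Int.card_Icc, sq]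
    congr 1 <;> omega
  have hsub : box.image (gridShift N x₀) ⊆ window N x₀ ((k : ℝ) / N) := by
    intro x hx
    obtain ⟨p, hp, rfl⟩ := mem_image.mp hx
    obtain ⟨hp₁, hp₂⟩ := mem_product.mp hp
    have hp₁' := abs_le.mpr (mem_Icc.mp hp₁)
    have hp₂' := abs_le.mpr (mem_Icc.mp hp₂)
    exact mem_filter.mpr ⟨hfull _ _ hp₁' hp₂', norm_gridShift_sub_le x₀ hp₁' hp₂'⟩
  calc (2 * k + 1) ^ 2 = #(box.image (gridShift N x₀)) := by
        rw [card_image_of_injective _ (gridShift_injective hN x₀), hbox]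
    _ ≤ _ := card_le_card hsub

theorem oracle_variance_bound_general
    (N k : ℕ) (hN : 1 ≤ N) (hk : 1 ≤ k)
    (n : ℝ) (hn : n = (N : ℝ) ^ 2) (h : ℝ) (hh : h = (k : ℝ) / N)
    (f H : ℝ × ℝ → ℝ) (hf0 : ∀ x ∈ grid N, 0 ≤ f x)
    (Γ : ℝ) (hfΓ : ∀ x ∈ grid N, f x ≤ Γ)
    (x₀ : ℝ × ℝ) (hx₀ : x₀ ∈ grid N)
    (β L γ : ℝ) (hβ : 0 < β) (hL : 0 < L)
    (hHolder : ∀ x ∈ window N x₀ h, ∀ y ∈ window N x₀ h, |f x - f y| ≤ L * ‖x - y‖ ^ β)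
    (hHγ : γ ≤ H x₀) (hγ : Real.sqrt 2 * L * h ^ β ≤ γ)
    (hfull : ∀ i j : ℤ, |i| ≤ (k : ℤ) → |j| ≤ (k : ℤ) →
      (x₀.1 + (i : ℝ) / N, x₀.2 + (j : ℝ) / N) ∈ grid N) :
    f x₀ * ∑ x ∈ window N x₀ h, (oracleWeight N f H x₀ h x) ^ 2 ≤
      3 * Γ / (h ^ 2 * n) := by
  set e : ℝ × ℝ → ℝ := fun x => exp (-(f x - f x₀) ^ 2 / H x₀ ^ 2)
  set W := window N x₀ h
  have hN0 : (0 : ℝ) < N := by exact_mod_cast hN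
  have hk0 : (0 : ℝ) < k := by exact_mod_cast hk
  have hx₀W : x₀ ∈ W := mem_window_self hx₀ (by rw [hh]; positivity)
  have he : ∀ x ∈ W, 1 / 2 ≤ e x := fun x hx =>
    half_le_exp_neg_sq_div_sq <| two_mul_sq_le_sq_of_abs_le
      (abs_sub_le_of_mem_window hβ.le hL.le hHolder hx₀W hx) (by linarith)
  have hcard : ((2 * k + 1) ^ 2 : ℝ) ≤ #W := by
    have := sq_two_mul_add_one_le_card_window (by omega) hfull
    rw [← hh] at this
    exact_mod_cast this
  have hD : (2 * k + 1) ^ 2 / 2 ≤ ∑ x ∈ W, e x := by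
    have := card_nsmul_le_sum W e (1 / 2) he
    rw [nsmul_eq_mul] at this
    linarith
  have hsq : ∑ x ∈ W, (oracleWeight N f H x₀ h x) ^ 2 ≤ (∑ x ∈ W, e x)⁻¹ :=
    sum_sq_div_sum_le_inv_sum W e (fun x _ => (exp_pos _).le)
      (fun x _ => exp_le_one_iff.mpr (div_nonpos_of_nonpos_of_nonneg
        (neg_nonpos.mpr (sq_nonneg _)) (sq_nonneg _)))
  have hΓ0 : 0 ≤ Γ := (hf0 x₀ hx₀).trans (hfΓ x₀ hx₀)
  calc f x₀ * ∑ x ∈ W, (oracleWeight N f H x₀ h x) ^ 2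
      ≤ Γ * ((2 * k + 1 : ℝ) ^ 2 / 2)⁻¹ :=
        mul_le_mul (hfΓ x₀ hx₀) (hsq.trans (inv_anti₀ (by positivity) hD))
          (sum_nonneg fun _ _ => sq_nonneg _) hΓ0
    _ ≤ 3 * Γ / k ^ 2 := by
        rw [inv_div, mul_div_assoc']
        gcongr ?_ / ?_
        · linarith
        · nlinarith
    _ = 3 * Γ / (h ^ 2 * n) := by
        rw [hh, hn, div_pow, div_mul_cancel₀ _ (by positivity)]

/-- **Variance term bound for the oracle weights:**
`f(x₀) · Σ_{x∈U_{x₀,h}} w*_h(x)² ≤ 3Γ/(h² n)`. -/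
theorem oracle_variance_bound
    (N k : ℕ) (hN : 1 ≤ N) (hk : 1 ≤ k)
    (n : ℝ) (hn : n = (N : ℝ) ^ 2) (h : ℝ) (hh : h = (k : ℝ) / N) (hNh : 1 ≤ (N : ℝ) * h)
    (f H : ℝ × ℝ → ℝ) (hf0 : ∀ x ∈ grid N, 0 ≤ f x)
    (Γ : ℝ) (hfΓ : ∀ x ∈ grid N, f x ≤ Γ)
    (x₀ : ℝ × ℝ) (hx₀ : x₀ ∈ grid N)
    (β L γ : ℝ) (hβ : 0 < β) (hL : 0 < L)
    (hHolder : ∀ x ∈ window N x₀ h, ∀ y ∈ window N x₀ h, |f x - f y| ≤ L * ‖x - y‖ ^ β)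
    (hHγ : γ ≤ H x₀) (hγ : Real.sqrt 2 * L * h ^ β ≤ γ)
    (hfull : ∀ i j : ℤ, |i| ≤ (k : ℤ) → |j| ≤ (k : ℤ) →
      (x₀.1 + (i : ℝ) / N, x₀.2 + (j : ℝ) / N) ∈ grid N) :
    f x₀ * ∑ x ∈ window N x₀ h, (oracleWeight N f H x₀ h x) ^ 2 ≤
      3 * Γ / (h ^ 2 * n) :=
  oracle_variance_bound_general N k hN hk n hn h hh f H hf0 Γ hfΓ x₀ hx₀ β L γ hβ hL hHolder hHγ hγ
    hfull
end
end

section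
/- Let 0 ≤ f₁, f₂ ≤ Γ and let Y₁, Y₂ be independent Poisson random variables with means f₁ and f₂. Define Z = (Y₁ − Y₂)² − (f₁ − f₂)² − f₁ − f₂. Then E Z = 0 and E exp( |Z|^{1/2} ) ≤ exp( 2Γ + 2√Γ + 2(e−1)Γ ). -/
/-!
The moment generating function of a Poisson variable of rate `r` is `t ↦ exp (r (eᵗ - 1))`,
so its cumulant generating function is `r (eᵗ - 1)`: its mean and variance both equal `r`.
Hence `E (Y₁ - Y₂)² = Var Y₁ + Var Y₂ + (E Y₁ - E Y₂)² = f₁ + f₂ + (f₁ - f₂)²`, which is `E Z = 0`.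
For the exponential moment, `√|Z| ≤ Y₁ + Y₂ + Γ + 2√Γ` pointwise, and `Y₁ + Y₂` is Poisson of
rate `f₁ + f₂ ≤ 2Γ`, whose moment generating function at `1` is `exp ((f₁ + f₂) (e - 1))`.
-/

open MeasureTheory ProbabilityTheory Real
open scoped NNReal ENNReal Nat

namespace ProbabilityTheory

lemma hasSum_exp_mul_poissonMeasure (r : ℝ≥0) (t : ℝ) :
    HasSum (fun n : ℕ ↦ (exp (-r) * r ^ n / n !) • exp (t * n)) (exp (r * (exp t - 1))) := by
  have h := (NormedSpace.expSeries_div_hasSum_exp (r * exp t : ℝ)).mul_left (exp (-r))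
  rw [← exp_eq_exp_ℝ, ← exp_add, neg_add_eq_sub, ← mul_sub_one] at h
  refine h.congr_fun fun n ↦ ?_
  rw [smul_eq_mul, mul_pow, ← exp_nat_mul]
  ring_nf

lemma integrable_exp_mul_map_cast_poissonMeasure (r : ℝ≥0) (t : ℝ) :
    Integrable (fun x ↦ exp (t * x)) Po(ℝ, r) := by
  rw [integrable_map_measure (by fun_prop) .of_discrete, integrable_poissonMeasure_iff]
  simpa [abs_of_pos (exp_pos _)] using (hasSum_exp_mul_poissonMeasure r t).summable

lemma mgf_id_map_cast_poissonMeasure (r : ℝ≥0) :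
    mgf id Po(ℝ, r) = fun t ↦ exp (r * (exp t - 1)) := by
  ext t
  rw [mgf, integral_map .of_discrete (by fun_prop), integral_poissonMeasure]
  exact (hasSum_exp_mul_poissonMeasure r t).tsum_eq

lemma cgf_id_map_cast_poissonMeasure (r : ℝ≥0) :
    cgf id Po(ℝ, r) = fun t ↦ r * (exp t - 1) := by
  ext t
  rw [cgf, mgf_id_map_cast_poissonMeasure, log_exp]

@[simp]
lemma integrableExpSet_id_map_cast_poissonMeasure (r : ℝ≥0) :
    integrableExpSet id Po(ℝ, r) = Set.univ := by
  ext t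
  simpa [integrableExpSet] using integrable_exp_mul_map_cast_poissonMeasure r t

lemma memLp_id_map_cast_poissonMeasure (r : ℝ≥0) (p : ℝ≥0) : MemLp id p Po(ℝ, r) :=
  memLp_of_mem_interior_integrableExpSet (by simp) p

lemma integral_id_map_cast_poissonMeasure (r : ℝ≥0) : ∫ x, x ∂Po(ℝ, r) = r := by
  simpa [cgf_id_map_cast_poissonMeasure] using
    (deriv_cgf_zero (X := id) (μ := Po(ℝ, r)) (by simp)).symm

lemma variance_id_map_cast_poissonMeasure (r : ℝ≥0) : Var[id; Po(ℝ, r)] = r := calc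
  Var[id; Po(ℝ, r)] = iteratedDeriv 2 (cgf id Po(ℝ, r)) 0 := by
    simpa using variance_tilted_mul (X := id) (μ := Po(ℝ, r)) (t := 0) (by simp)
  _ = r := by simp [cgf_id_map_cast_poissonMeasure, iteratedDeriv_succ]

variable {Ω : Type*} {mΩ : MeasurableSpace Ω} {μ : Measure Ω}

lemma HasLaw.of_map_eq {𝓧 : Type*} {m𝓧 : MeasurableSpace 𝓧} {ν : Measure 𝓧} [NeZero ν]
    {X : Ω → 𝓧} (h : μ.map X = ν) : HasLaw X ν μ :=
  ⟨aemeasurable_of_map_neZero (h ▸ inferInstance), h⟩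

lemma HasLaw.memLp_of_memLp_id {E : Type*} [NormedAddCommGroup E] {mE : MeasurableSpace E}
    {ν : Measure E} {X : Ω → E} {p : ℝ≥0∞} (hX : HasLaw X ν μ) (h : MemLp id p ν) :
    MemLp X p μ := by
  rw [← hX.map_eq] at h
  exact (memLp_map_measure_iff h.aestronglyMeasurable hX.aemeasurable).1 h

section PoissonLaw

variable {r r₁ r₂ : ℝ≥0} {X X₁ X₂ : Ω → ℝ}

lemma HasLaw.memLp_map_cast_poissonMeasure (hX : HasLaw X Po(ℝ, r) μ) (p : ℝ≥0) :
    MemLp X p μ :=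
  hX.memLp_of_memLp_id (memLp_id_map_cast_poissonMeasure r p)

lemma HasLaw.integrable_exp_mul_map_cast_poissonMeasure (hX : HasLaw X Po(ℝ, r) μ) (t : ℝ) :
    Integrable (fun ω ↦ exp (t * X ω)) μ := by
  have h := _root_.ProbabilityTheory.integrable_exp_mul_map_cast_poissonMeasure r t
  rw [← hX.map_eq] at h
  exact h.comp_aemeasurable hX.aemeasurable

lemma HasLaw.mgf_map_cast_poissonMeasure (hX : HasLaw X Po(ℝ, r) μ) :
    mgf X μ = fun t ↦ exp (r * (exp t - 1)) := by
  rw [← mgf_id_map hX.aemeasurable, hX.map_eq, mgf_id_map_cast_poissonMeasure]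

lemma IndepFun.integral_sub_sq [IsProbabilityMeasure μ] (hX₁₂ : X₁ ⟂ᵢ[μ] X₂)
    (hX₁ : MemLp X₁ 2 μ) (hX₂ : MemLp X₂ 2 μ) :
    ∫ ω, (X₁ ω - X₂ ω) ^ 2 ∂μ = Var[X₁; μ] + Var[X₂; μ] + (μ[X₁] - μ[X₂]) ^ 2 := by
  have hvar : Var[X₁ - X₂; μ] = Var[X₁; μ] + Var[X₂; μ] := by
    rw [variance_sub hX₁ hX₂, hX₁₂.covariance_eq_zero hX₁ hX₂]
    ring
  rw [variance_eq_sub (hX₁.sub hX₂)] at hvar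
  simp only [Pi.sub_apply, Pi.pow_apply] at hvar
  rw [integral_sub (hX₁.integrable one_le_two) (hX₂.integrable one_le_two)] at hvar
  linarith

lemma IndepFun.integral_sub_sq_map_cast_poissonMeasure (hX₁₂ : X₁ ⟂ᵢ[μ] X₂)
    (hX₁ : HasLaw X₁ Po(ℝ, r₁) μ) (hX₂ : HasLaw X₂ Po(ℝ, r₂) μ) :
    ∫ ω, (X₁ ω - X₂ ω) ^ 2 ∂μ = r₁ + r₂ + (r₁ - r₂ : ℝ) ^ 2 := by
  have := hX₁.isProbabilityMeasure
  rw [hX₁₂.integral_sub_sq (hX₁.memLp_map_cast_poissonMeasure 2)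
    (hX₂.memLp_map_cast_poissonMeasure 2), hX₁.variance_eq, hX₂.variance_eq, hX₁.integral_eq,
    hX₂.integral_eq, variance_id_map_cast_poissonMeasure, variance_id_map_cast_poissonMeasure,
    integral_id_map_cast_poissonMeasure, integral_id_map_cast_poissonMeasure]

lemma IndepFun.integral_exp_le_of_le_add_map_cast_poissonMeasure (hX₁₂ : X₁ ⟂ᵢ[μ] X₂)
    (hX₁ : HasLaw X₁ Po(ℝ, r₁) μ) (hX₂ : HasLaw X₂ Po(ℝ, r₂) μ) {W : Ω → ℝ} {c : ℝ}
    (hW : ∀ ω, W ω ≤ c + X₁ ω + X₂ ω) :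
    ∫ ω, exp (W ω) ∂μ ≤ exp (c + (r₁ + r₂) * (exp 1 - 1)) := by
  have hS : HasLaw (X₁ + X₂) Po(ℝ, r₁ + r₂) μ := hX₁₂.hasLaw_add_map_cast_poissonMeasure hX₁ hX₂
  calc ∫ ω, exp (W ω) ∂μ
      ≤ ∫ ω, exp c * exp (1 * (X₁ + X₂) ω) ∂μ := by
        refine integral_mono_of_nonneg (ae_of_all _ fun _ ↦ (exp_pos _).le)
          ((hS.integrable_exp_mul_map_cast_poissonMeasure 1).const_mul _) (ae_of_all _ fun ω ↦ ?_)
        simpa only [← exp_add, exp_le_exp, one_mul, Pi.add_apply, ← add_assoc] using hW ω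
    _ = exp (c + (r₁ + r₂) * (exp 1 - 1)) := by
        rw [integral_const_mul, ← mgf, hS.mgf_map_cast_poissonMeasure, ← exp_add, NNReal.coe_add]

end PoissonLaw

end ProbabilityTheory

lemma Real.sqrt_abs_sub_sq_sub_le {x₁ x₂ f₁ f₂ Γ : ℝ} (hx₁ : 0 ≤ x₁) (hx₂ : 0 ≤ x₂)
    (h₁ : 0 ≤ f₁) (h₂ : 0 ≤ f₂) (h₁Γ : f₁ ≤ Γ) (h₂Γ : f₂ ≤ Γ) :
    √|(x₁ - x₂) ^ 2 - (f₁ - f₂) ^ 2 - f₁ - f₂| ≤ Γ + 2 * √Γ + x₁ + x₂ := by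
  have hΓ : 0 ≤ Γ := h₁.trans h₁Γ
  have hsq : √Γ ^ 2 = Γ := sq_sqrt hΓ
  have habs : |(x₁ - x₂) ^ 2 - (f₁ - f₂) ^ 2 - f₁ - f₂| ≤ (x₁ + x₂) ^ 2 + Γ ^ 2 + 2 * Γ := by
    rw [abs_le]
    constructor <;> nlinarith
  rw [sqrt_le_iff]
  constructor
  · positivity
  · nlinarith [sqrt_nonneg Γ, mul_nonneg (add_nonneg hx₁ hx₂) (sqrt_nonneg Γ),
      mul_nonneg hΓ (sqrt_nonneg Γ), mul_nonneg (add_nonneg hx₁ hx₂) hΓ]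

theorem poisson_diff_sq_exp_moment_general
    {Ω : Type*} [MeasurableSpace Ω] (μ : Measure Ω) [IsProbabilityMeasure μ]
    (Γ f₁ f₂ : ℝ) (h₁ : 0 ≤ f₁) (h₂ : 0 ≤ f₂) (h₁Γ : f₁ ≤ Γ) (h₂Γ : f₂ ≤ Γ)
    (Y₁ Y₂ : Ω → ℕ)
    (hind : IndepFun Y₁ Y₂ μ)
    (hd₁ : Measure.map Y₁ μ = poissonMeasure f₁.toNNReal)
    (hd₂ : Measure.map Y₂ μ = poissonMeasure f₂.toNNReal)
    (Z : Ω → ℝ)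
    (hZ : Z = fun ω => ((Y₁ ω : ℝ) - (Y₂ ω : ℝ)) ^ 2 - (f₁ - f₂) ^ 2 - f₁ - f₂) :
    (∫ ω, Z ω ∂μ = 0) ∧
    ∫ ω, Real.exp (|Z ω| ^ ((1 : ℝ) / 2)) ∂μ ≤
      Real.exp (2 * Γ + 2 * Real.sqrt Γ + 2 * (Real.exp 1 - 1) * Γ) := by
  set X₁ : Ω → ℝ := fun ω ↦ Y₁ ω
  set X₂ : Ω → ℝ := fun ω ↦ Y₂ ω
  have hX₁ : HasLaw X₁ Po(ℝ, f₁.toNNReal) μ := .comp ⟨.of_discrete, rfl⟩ (.of_map_eq hd₁)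
  have hX₂ : HasLaw X₂ Po(ℝ, f₂.toNNReal) μ := .comp ⟨.of_discrete, rfl⟩ (.of_map_eq hd₂)
  have hX₁₂ : X₁ ⟂ᵢ[μ] X₂ := hind.comp measurable_from_top measurable_from_top
  subst hZ
  constructor
  · have hint : Integrable (fun ω ↦ (X₁ ω - X₂ ω) ^ 2) μ :=
      ((hX₁.memLp_map_cast_poissonMeasure 2).sub (hX₂.memLp_map_cast_poissonMeasure 2)).integrable_sq
    simp only [sub_sub]
    rw [integral_sub hint (integrable_const _), integral_const,
      hX₁₂.integral_sub_sq_map_cast_poissonMeasure hX₁ hX₂, coe_toNNReal _ h₁, coe_toNNReal _ h₂]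
    simp only [probReal_univ, one_smul]
    ring
  · have hbound (ω : Ω) : √|(X₁ ω - X₂ ω) ^ 2 - (f₁ - f₂) ^ 2 - f₁ - f₂| ≤
        Γ + 2 * √Γ + X₁ ω + X₂ ω :=
      sqrt_abs_sub_sq_sub_le (Nat.cast_nonneg _) (Nat.cast_nonneg _) h₁ h₂ h₁Γ h₂Γ
    simp_rw [← sqrt_eq_rpow]
    refine (hX₁₂.integral_exp_le_of_le_add_map_cast_poissonMeasure hX₁ hX₂ hbound).trans ?_
    rw [coe_toNNReal _ h₁, coe_toNNReal _ h₂, exp_le_exp]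
    nlinarith [add_one_le_exp 1]

/-- **Exponential moment of the centered squared difference.** Let `0 ≤ f₁, f₂ ≤ Γ` and let
`Y₁, Y₂` be independent Poisson variables with means `f₁, f₂`. With
`Z = (Y₁ − Y₂)² − (f₁ − f₂)² − f₁ − f₂`, one has `E Z = 0` and
`E exp(|Z|^{1/2}) ≤ exp(2Γ + 2√Γ + 2(e−1)Γ)`. -/
theorem poisson_diff_sq_exp_moment
    {Ω : Type*} [MeasurableSpace Ω] (μ : Measure Ω) [IsProbabilityMeasure μ]
    (Γ f₁ f₂ : ℝ) (h₁ : 0 ≤ f₁) (h₂ : 0 ≤ f₂) (h₁Γ : f₁ ≤ Γ) (h₂Γ : f₂ ≤ Γ)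
    (Y₁ Y₂ : Ω → ℕ) (hm₁ : Measurable Y₁) (hm₂ : Measurable Y₂)
    (hind : IndepFun Y₁ Y₂ μ)
    (hd₁ : Measure.map Y₁ μ = poissonMeasure f₁.toNNReal)
    (hd₂ : Measure.map Y₂ μ = poissonMeasure f₂.toNNReal)
    (Z : Ω → ℝ)
    (hZ : Z = fun ω => ((Y₁ ω : ℝ) - (Y₂ ω : ℝ)) ^ 2 - (f₁ - f₂) ^ 2 - f₁ - f₂) :
    (∫ ω, Z ω ∂μ = 0) ∧
    ∫ ω, Real.exp (|Z ω| ^ ((1 : ℝ) / 2)) ∂μ ≤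
      Real.exp (2 * Γ + 2 * Real.sqrt Γ + 2 * (Real.exp 1 - 1) * Γ) :=
  poisson_diff_sq_exp_moment_general μ Γ f₁ f₂ h₁ h₂ h₁Γ h₂Γ Y₁ Y₂ hind hd₁ hd₂ Z hZ
end

section
/- Let S be a nonempty finite set, H > 0, ε ≥ 0 with ε < H², and let a, b : S → [0,∞) satisfy |a(x) − b(x)| ≤ ε for all x ∈ S. Define the normalized exponential weights w_a(x) = exp(−a(x)/H²) / Σ_{x'∈S} exp(−a(x')/H²) and w_b(x) = exp(−b(x)/H²) / Σ_{x'∈S} exp(−b(x')/H²). Then for every x ∈ S, w_a(x) ≤ ( (1 + 2ε/H²) / (1 − ε/H²) ) · w_b(x). -/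
/-! Perturbing every exponent by at most `δ` changes each weight `exp (f x)` by a factor in
`[e^{-δ}, e^δ]`, hence the normalized weight by a factor at most `e^{2δ}`. With `δ = ε/H²`,
the bound `e^{2t} ≤ (1 + 2t)/(1 - t)` on `[0, 1)` follows from `e^t ≤ 1 + 2t` and
`e^t ≤ 1/(1 - t)`. -/

open Real Finset

theorem exp_two_mul_le_one_add_two_mul_div_one_sub {t : ℝ} (ht₀ : 0 ≤ t) (ht₁ : t < 1) :
    exp (2 * t) ≤ (1 + 2 * t) / (1 - t) := by
  have h_lin : exp t ≤ 1 + 2 * t := by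
    have := abs_exp_sub_one_le (x := t) (by rw [abs_of_nonneg ht₀]; exact ht₁.le)
    rw [abs_of_nonneg ht₀] at this
    linarith [le_abs_self (exp t - 1)]
  calc exp (2 * t) = exp t * exp t := by rw [two_mul, exp_add]
    _ ≤ (1 + 2 * t) * (1 / (1 - t)) :=
      mul_le_mul h_lin (exp_bound_div_one_sub_of_interval ht₀ ht₁) (exp_pos t).le (by linarith)
    _ = (1 + 2 * t) / (1 - t) := mul_one_div _ _

theorem exp_le_exp_mul_exp_of_abs_sub_le {u v δ : ℝ} (h : |u - v| ≤ δ) :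
    exp u ≤ exp δ * exp v := by
  rw [← exp_add, exp_le_exp]
  linarith [le_abs_self (u - v)]

theorem exp_div_sum_exp_le_exp_two_mul {ι : Type*} {S : Finset ι} {f g : ι → ℝ} {δ : ℝ}
    (hfg : ∀ y ∈ S, |f y - g y| ≤ δ) {x : ι} (hx : x ∈ S) :
    exp (f x) / ∑ y ∈ S, exp (f y) ≤ exp (2 * δ) * (exp (g x) / ∑ y ∈ S, exp (g y)) := by
  have hsum : ∑ y ∈ S, exp (g y) ≤ exp δ * ∑ y ∈ S, exp (f y) := by
    rw [mul_sum]
    exact sum_le_sum fun y hy =>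
      exp_le_exp_mul_exp_of_abs_sub_le ((abs_sub_comm _ _).trans_le (hfg y hy))
  have hg_pos : 0 < ∑ y ∈ S, exp (g y) := sum_pos (fun y _ => exp_pos (g y)) ⟨x, hx⟩
  have hsum' : (∑ y ∈ S, exp (g y)) / exp δ ≤ ∑ y ∈ S, exp (f y) := by
    rw [div_le_iff₀ (exp_pos δ), mul_comm]
    exact hsum
  calc exp (f x) / ∑ y ∈ S, exp (f y)
      ≤ exp δ * exp (g x) / ((∑ y ∈ S, exp (g y)) / exp δ) :=
        div_le_div₀ (by positivity) (exp_le_exp_mul_exp_of_abs_sub_le (hfg x hx))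
          (by positivity) hsum'
    _ = exp (2 * δ) * (exp (g x) / ∑ y ∈ S, exp (g y)) := by
        rw [two_mul, exp_add]
        field_simp

theorem exp_weights_stability_general
    {α : Type*} (S : Finset α) (H ε : ℝ)
    (hε : 0 ≤ ε) (hεH : ε < H ^ 2)
    (a b : α → ℝ)
    (hab : ∀ x ∈ S, |a x - b x| ≤ ε) :
    ∀ x ∈ S,
      Real.exp (-a x / H ^ 2) / (∑ x' ∈ S, Real.exp (-a x' / H ^ 2)) ≤
        ((1 + 2 * ε / H ^ 2) / (1 - ε / H ^ 2)) *
          (Real.exp (-b x / H ^ 2) / (∑ x' ∈ S, Real.exp (-b x' / H ^ 2))) := by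
  intro x hx
  have hH : 0 < H ^ 2 := hε.trans_lt hεH
  have hscaled : ∀ y ∈ S, |-a y / H ^ 2 - -b y / H ^ 2| ≤ ε / H ^ 2 := fun y hy => by
    rw [← sub_div, abs_div, abs_of_pos hH, neg_sub_neg, abs_sub_comm]
    exact div_le_div_of_nonneg_right (hab y hy) hH.le
  calc _ ≤ exp (2 * (ε / H ^ 2)) * _ := exp_div_sum_exp_le_exp_two_mul hscaled hx
    _ ≤ _ := by
      gcongr
      exact (exp_two_mul_le_one_add_two_mul_div_one_sub (by positivity)
        ((div_lt_one hH).2 hεH)).trans_eq (by ring)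

/-- **Stability of normalized exponential weights.** If `a, b : S → [0,∞)` satisfy
`|a(x) − b(x)| ≤ ε` on a nonempty finite set `S`, with `0 ≤ ε < H²`, then the normalized
exponential weights satisfy `w_a(x) ≤ ((1 + 2ε/H²)/(1 − ε/H²)) w_b(x)` for every `x ∈ S`. -/
theorem exp_weights_stability
    {α : Type*} (S : Finset α) (hS : S.Nonempty) (H ε : ℝ) (hH : 0 < H)
    (hε : 0 ≤ ε) (hεH : ε < H ^ 2)
    (a b : α → ℝ) (ha : ∀ x ∈ S, 0 ≤ a x) (hb : ∀ x ∈ S, 0 ≤ b x)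
    (hab : ∀ x ∈ S, |a x - b x| ≤ ε) :
    ∀ x ∈ S,
      Real.exp (-a x / H ^ 2) / (∑ x' ∈ S, Real.exp (-a x' / H ^ 2)) ≤
        ((1 + 2 * ε / H ^ 2) / (1 - ε / H ^ 2)) *
          (Real.exp (-b x / H ^ 2) / (∑ x' ∈ S, Real.exp (-b x' / H ^ 2))) :=
  exp_weights_stability_general S H ε hε hεH a b hab
end
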